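/- Under the assumptions of Lemma 1 with v = (1,0,…,0): if unit vectors u → v and t → ∞, then P(uᵀX₁ ≥ tr)/P(X_{1,1} ≥ tr) → 1 for each fixed r > 0, where X_{1,1} is the first coordinate of X₁. -/

import Mathlib

/-!
Write `H a = {x | a ≤ ⟪v, x⟫}`. By homogeneity `ν (H a) = a ^ (-α) ν (H 1)`, so `a ↦ ν (H a)` is
continuous and the hyperplanes bounding the half-spaces are `ν`-null; hence regular variation gives
`P(⟪v, X⟫ ≥ t a) / P(‖X‖ ≥ t) → a ^ (-α) ν (H 1)` for every `a > 0`. If `‖u - v‖ ≤ η²`, then off the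
event `‖X‖ > t / η` the projections `⟪u, X⟫` and `⟪v, X⟫` differ by at most `η t`, so
`P(⟪u, X⟫ ≥ t)` is squeezed between the tails of `⟪v, X⟫` at `t (1 ± η)`, up to `P(‖X‖ > t / η)`,
which is a fraction of order `η ^ α` of `P(‖X‖ > t)`. Letting `η → 0` after `t → ∞` shows that the
projection along `u` and the first coordinate have the same tail asymptotics `ν (H 1) P(‖X‖ ≥ t)`.
-/

open MeasureTheory Filter Topology
open scoped RealInnerProductSpace Pointwise

theorem tendsto_of_forall_eventually_le_le {ι κ α : Type*} [TopologicalSpace α] [LinearOrder α]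
    [OrderTopology α] {l : Filter ι} {p : Filter κ} [p.NeBot] {f : ι → α} {lo hi : κ → ι → α}
    {a b : κ → α} {y : α} (hlo : ∀ᶠ η in p, Tendsto (lo η) l (𝓝 (a η)))
    (hhi : ∀ᶠ η in p, Tendsto (hi η) l (𝓝 (b η))) (ha : Tendsto a p (𝓝 y))
    (hb : Tendsto b p (𝓝 y)) (hle : ∀ᶠ η in p, ∀ᶠ i in l, lo η i ≤ f i ∧ f i ≤ hi η i) :
    Tendsto f l (𝓝 y) := by
  refine tendsto_order.2 ⟨fun y' hy' => ?_, fun y' hy' => ?_⟩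
  · obtain ⟨η, hη, hloη, hleη⟩ := ((ha.eventually (lt_mem_nhds hy')).and (hlo.and hle)).exists
    filter_upwards [hloη.eventually (lt_mem_nhds hη), hleη] with i hlt hbd
    exact hlt.trans_le hbd.1
  · obtain ⟨η, hη, hhiη, hleη⟩ := ((hb.eventually (gt_mem_nhds hy')).and (hhi.and hle)).exists
    filter_upwards [hhiη.eventually (gt_mem_nhds hη), hleη] with i hlt hbd
    exact hbd.2.trans_lt hlt

theorem measure_setOf_eq_eq_zero_of_tendsto {α : Type*} [MeasurableSpace α] {ν : Measure α}
    {f : α → ℝ} (hf : Measurable f) {a : ℝ} (hfin : ν {x | a ≤ f x} ≠ ⊤)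
    (hcont : Tendsto (fun b => ν {x | b ≤ f x}) (𝓝[>] a) (𝓝 (ν {x | a ≤ f x}))) :
    ν {x | f x = a} = 0 := by
  have hsplit : ∀ b > a, ν {x | f x = a} + ν {x | b ≤ f x} ≤ ν {x | a ≤ f x} := fun b hb => by
    have hdisj : Disjoint {x | f x = a} {x | b ≤ f x} :=
      Set.disjoint_left.2 fun x (h₁ : f x = a) (h₂ : b ≤ f x) => by linarith
    rw [← measure_union hdisj (measurableSet_le measurable_const hf)]
    exact measure_mono (Set.union_subset (fun x (hx : f x = a) => hx.ge)
      fun x (hx : b ≤ f x) => hb.le.trans hx)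
  have hlim : ν {x | f x = a} + ν {x | a ≤ f x} ≤ 0 + ν {x | a ≤ f x} := by
    rw [zero_add]
    exact le_of_tendsto (tendsto_const_nhds.add hcont) (eventually_nhdsWithin_of_forall hsplit)
  exact nonpos_iff_eq_zero.1 (ENNReal.le_of_add_le_add_right hfin hlim)

theorem eventually_pos_of_tendsto_div_rpow {g : ℝ → ℝ} {α c : ℝ} (hc : 0 < c)
    (hg : Tendsto (fun t => g t / t ^ (-α)) atTop (𝓝 c)) : ∀ᶠ t in atTop, 0 < g t := by
  filter_upwards [hg.eventually_const_lt hc, eventually_gt_atTop 0] with t hgt ht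
  exact (div_pos_iff_of_pos_right (Real.rpow_pos_of_pos ht _)).1 hgt

theorem tendsto_comp_mul_div_of_tendsto_div_rpow {g : ℝ → ℝ} {α c : ℝ} (hc : c ≠ 0)
    (hg : Tendsto (fun t => g t / t ^ (-α)) atTop (𝓝 c)) {K : ℝ} (hK : 0 < K) :
    Tendsto (fun t => g (t * K) / g t) atTop (𝓝 (K ^ (-α))) := by
  have h := ((hg.comp (tendsto_id.atTop_mul_const hK)).div hg hc).mul_const (K ^ (-α))
  rw [div_self hc, one_mul] at h
  refine h.congr' ?_
  filter_upwards [eventually_gt_atTop 0] with t ht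
  simp only [Pi.div_apply, Function.comp_apply, id, Real.mul_rpow ht.le hK.le]
  have htα : t ^ (-α) ≠ 0 := (Real.rpow_pos_of_pos ht _).ne'
  have hKα : K ^ (-α) ≠ 0 := (Real.rpow_pos_of_pos hK _).ne'
  field_simp

section InnerProductSpace

variable {E : Type*} [NormedAddCommGroup E] [InnerProductSpace ℝ E]

theorem smul_setOf_le_inner {v : E} {t : ℝ} (ht : 0 < t) (a : ℝ) :
    t • {x : E | a ≤ ⟪v, x⟫} = {x | t * a ≤ ⟪v, x⟫} := by
  ext x
  rw [Set.mem_smul_set_iff_inv_smul_mem₀ ht.ne']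
  change a ≤ ⟪v, t⁻¹ • x⟫ ↔ t * a ≤ ⟪v, x⟫
  rw [real_inner_smul_right, inv_mul_eq_div, le_div_iff₀ ht, mul_comm]

theorem exists_pos_le_norm_of_le_inner {v : E} (hv : v ≠ 0) {a : ℝ} (ha : 0 < a) :
    ∃ ε > 0, ∀ x ∈ {x : E | a ≤ ⟪v, x⟫}, ε ≤ ‖x‖ :=
  ⟨a / ‖v‖, by positivity, fun x (hx : a ≤ ⟪v, x⟫) => by
    rw [div_le_iff₀' (norm_pos_iff.2 hv)]
    exact hx.trans (real_inner_le_norm v x)⟩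

theorem le_inner_or_lt_norm_of_le_inner {u v x : E} {s s' R : ℝ} (hR : ‖u - v‖ * R ≤ s - s')
    (hx : s ≤ ⟪u, x⟫) : s' ≤ ⟪v, x⟫ ∨ R < ‖x‖ := by
  refine (le_or_gt ‖x‖ R).imp (fun hxR => ?_) id
  have h : ⟪u - v, x⟫ ≤ ‖u - v‖ * R :=
    (real_inner_le_norm _ _).trans (mul_le_mul_of_nonneg_left hxR (norm_nonneg _))
  rw [inner_sub_left] at h
  linarith

section Projection

variable {Ω : Type*} [MeasurableSpace Ω] {μ : Measure Ω} [IsFiniteMeasure μ] {X : Ω → E}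

theorem measureReal_le_inner_le_add {u v : E} {s s' R : ℝ} (hR : ‖u - v‖ * R ≤ s - s') :
    μ.real {ω | s ≤ ⟪u, X ω⟫} ≤ μ.real {ω | s' ≤ ⟪v, X ω⟫} + μ.real {ω | R < ‖X ω‖} :=
  (measureReal_mono fun _ hω => le_inner_or_lt_norm_of_le_inner hR hω).trans
    (measureReal_union_le _ _)

theorem measureReal_le_inner_div_bounds {u v : E} {s η : ℝ} (hs : 0 < s) (hη : 0 < η)
    (huv : ‖u - v‖ ≤ η ^ 2) (hg : 0 < μ.real {ω | s < ‖X ω‖}) :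
    μ.real {ω | s * (1 + η) ≤ ⟪v, X ω⟫} / μ.real {ω | s ≤ ‖X ω‖}
        - μ.real {ω | s * η⁻¹ < ‖X ω‖} / μ.real {ω | s < ‖X ω‖}
      ≤ μ.real {ω | s ≤ ⟪u, X ω⟫} / μ.real {ω | s ≤ ‖X ω‖} ∧
    μ.real {ω | s ≤ ⟪u, X ω⟫} / μ.real {ω | s ≤ ‖X ω‖}
      ≤ μ.real {ω | s * (1 - η) ≤ ⟪v, X ω⟫} / μ.real {ω | s ≤ ‖X ω‖}
        + μ.real {ω | s * η⁻¹ < ‖X ω‖} / μ.real {ω | s < ‖X ω‖} := by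
  have hR : ‖u - v‖ * (s * η⁻¹) ≤ s * η :=
    calc ‖u - v‖ * (s * η⁻¹) ≤ η ^ 2 * (s * η⁻¹) := by gcongr
      _ = s * η := by field_simp
  have hupper := measureReal_le_inner_le_add (μ := μ) (X := X) (s' := s * (1 - η))
    (hR.trans_eq (by ring))
  have hlower := measureReal_le_inner_le_add (μ := μ) (X := X) (u := v) (v := u)
    (s := s * (1 + η)) (s' := s) (R := s * η⁻¹) (by rw [norm_sub_rev]; linarith)
  set D := μ.real {ω | s ≤ ‖X ω‖}
  set g := μ.real {ω | s < ‖X ω‖}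
  set G := μ.real {ω | s * η⁻¹ < ‖X ω‖}
  have hGD : G / D ≤ G / g :=
    div_le_div_of_nonneg_left measureReal_nonneg hg
      (measureReal_mono fun ω (h : s < ‖X ω‖) => h.le)
  constructor
  · calc μ.real {ω | s * (1 + η) ≤ ⟪v, X ω⟫} / D - G / g
        ≤ (μ.real {ω | s * (1 + η) ≤ ⟪v, X ω⟫} - G) / D := by rw [sub_div]; linarith
      _ ≤ μ.real {ω | s ≤ ⟪u, X ω⟫} / D := by gcongr; linarith
  · calc μ.real {ω | s ≤ ⟪u, X ω⟫} / D ≤ (μ.real {ω | s * (1 - η) ≤ ⟪v, X ω⟫} + G) / D := by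
          gcongr
      _ ≤ μ.real {ω | s * (1 - η) ≤ ⟪v, X ω⟫} / D + G / g := by rw [add_div]; linarith

theorem tendsto_measureReal_le_inner_div_of_tendsto {ι : Type*} {l : Filter ι} {U : ι → E}
    {v : E} {t : ι → ℝ} {α L : ℝ} (hα : 0 < α) (hU : Tendsto U l (𝓝 v))
    (ht : Tendsto t l atTop)
    (hhalf : ∀ a > 0,
      Tendsto (fun s => μ.real {ω | s * a ≤ ⟪v, X ω⟫} / μ.real {ω | s ≤ ‖X ω‖}) atTop
        (𝓝 (a ^ (-α) * L)))
    (hpos : ∀ᶠ s in atTop, 0 < μ.real {ω | s < ‖X ω‖})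
    (htail : ∀ K > 0,
      Tendsto (fun s => μ.real {ω | s * K < ‖X ω‖} / μ.real {ω | s < ‖X ω‖}) atTop
        (𝓝 (K ^ (-α)))) :
    Tendsto (fun i => μ.real {ω | t i ≤ ⟪U i, X ω⟫} / μ.real {ω | t i ≤ ‖X ω‖}) l (𝓝 L) := by
  have hnear (σ : ℝ) : Tendsto (fun η : ℝ => (1 + σ * η) ^ (-α) * L) (𝓝[>] 0) (𝓝 L) := by
    have hσ : ContinuousAt (fun η : ℝ => (1 + σ * η) ^ (-α) * L) 0 := by
      fun_prop (disch := norm_num)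
    simpa using hσ.tendsto.mono_left nhdsWithin_le_nhds
  have hsmall : Tendsto (fun η : ℝ => η⁻¹ ^ (-α)) (𝓝[>] 0) (𝓝 0) :=
    (tendsto_rpow_neg_atTop hα).comp tendsto_inv_nhdsGT_zero
  refine tendsto_of_forall_eventually_le_le (p := 𝓝[>] 0)
    (lo := fun η i => μ.real {ω | t i * (1 + η) ≤ ⟪v, X ω⟫} / μ.real {ω | t i ≤ ‖X ω‖}
      - μ.real {ω | t i * η⁻¹ < ‖X ω‖} / μ.real {ω | t i < ‖X ω‖})
    (hi := fun η i => μ.real {ω | t i * (1 - η) ≤ ⟪v, X ω⟫} / μ.real {ω | t i ≤ ‖X ω‖}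
      + μ.real {ω | t i * η⁻¹ < ‖X ω‖} / μ.real {ω | t i < ‖X ω‖})
    (a := fun η => (1 + η) ^ (-α) * L - η⁻¹ ^ (-α))
    (b := fun η => (1 - η) ^ (-α) * L + η⁻¹ ^ (-α)) ?_ ?_ ?_ ?_ ?_
  · filter_upwards [self_mem_nhdsWithin] with η (hη : 0 < η)
    exact ((hhalf _ (by linarith)).comp ht).sub ((htail _ (inv_pos.2 hη)).comp ht)
  · filter_upwards [Ioo_mem_nhdsGT one_pos] with η hη
    exact ((hhalf _ (by linarith [hη.2])).comp ht).add ((htail _ (inv_pos.2 hη.1)).comp ht)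
  · simpa using (hnear 1).sub hsmall
  · simpa [sub_eq_add_neg] using (hnear (-1)).add hsmall
  · filter_upwards [self_mem_nhdsWithin] with η (hη : 0 < η)
    filter_upwards [ht.eventually_gt_atTop 0, ht.eventually hpos,
      hU.eventually (Metric.closedBall_mem_nhds v (by positivity : 0 < η ^ 2))]
      with i hti hgi hUi
    exact measureReal_le_inner_div_bounds hti hη (mem_closedBall_iff_norm.1 hUi) hgi

end Projection

section Homogeneous

variable [MeasurableSpace E]

def IsHomogeneousAwayFromZero (ν : Measure E) (α : ℝ) : Prop :=
  ∀ a : ℝ, 0 < a → ∀ B : Set E, MeasurableSet B → (∃ ε > 0, ∀ x ∈ B, ε ≤ ‖x‖) →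
    ν (a • B) = ENNReal.ofReal (a ^ (-α)) * ν B

variable [BorelSpace E]

theorem measurableSet_setOf_le_inner (v : E) (a : ℝ) : MeasurableSet {x : E | a ≤ ⟪v, x⟫} :=
  measurableSet_le measurable_const (continuous_const.inner continuous_id').measurable

variable {ν : Measure E} {α : ℝ}

theorem measure_setOf_le_inner_eq_rpow_mul (hom : IsHomogeneousAwayFromZero ν α) {v : E}
    (hv : v ≠ 0) {a : ℝ} (ha : 0 < a) :
    ν {x | a ≤ ⟪v, x⟫} = ENNReal.ofReal (a ^ (-α)) * ν {x | 1 ≤ ⟪v, x⟫} := by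
  have h := hom a ha _ (measurableSet_setOf_le_inner v 1)
    (exists_pos_le_norm_of_le_inner hv one_pos)
  rwa [smul_setOf_le_inner ha, mul_one] at h

theorem measure_setOf_le_inner_ne_top (hom : IsHomogeneousAwayFromZero ν α) {v : E} (hv : v ≠ 0)
    (hfin : ν {x | 1 ≤ ⟪v, x⟫} ≠ ⊤) {a : ℝ} (ha : 0 < a) : ν {x | a ≤ ⟪v, x⟫} ≠ ⊤ := by
  rw [measure_setOf_le_inner_eq_rpow_mul hom hv ha]
  exact ENNReal.mul_ne_top ENNReal.ofReal_ne_top hfin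

theorem measure_frontier_setOf_le_inner (hom : IsHomogeneousAwayFromZero ν α) {v : E}
    (hv : v ≠ 0) (hfin : ν {x | 1 ≤ ⟪v, x⟫} ≠ ⊤) {a : ℝ} (ha : 0 < a) :
    ν (frontier {x | a ≤ ⟪v, x⟫}) = 0 := by
  have hinner : Continuous fun x : E => ⟪v, x⟫ := continuous_const.inner continuous_id'
  have hcont : ContinuousAt (fun b : ℝ => ENNReal.ofReal (b ^ (-α)) * ν {x | 1 ≤ ⟪v, x⟫}) a :=
    ENNReal.Tendsto.mul_const (ENNReal.continuous_ofReal.continuousAt.comp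
      (Real.continuousAt_rpow_const _ _ (.inl ha.ne'))) (.inr hfin)
  have hscale : ∀ᶠ b in 𝓝[>] a,
      ν {x | b ≤ ⟪v, x⟫} = ENNReal.ofReal (b ^ (-α)) * ν {x | 1 ≤ ⟪v, x⟫} :=
    eventually_nhdsWithin_of_forall fun b (hb : a < b) =>
      measure_setOf_le_inner_eq_rpow_mul hom hv (ha.trans hb)
  refine measure_mono_null (frontier_le_subset_eq continuous_const hinner) ?_
  simp_rw [eq_comm (a := a)]
  refine measure_setOf_eq_eq_zero_of_tendsto hinner.measurable
    (measure_setOf_le_inner_ne_top hom hv hfin ha) ?_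
  rw [measure_setOf_le_inner_eq_rpow_mul hom hv ha]
  exact (hcont.tendsto.mono_left nhdsWithin_le_nhds).congr' (hscale.mono fun b hb => hb.symm)

variable {Ω : Type*} [MeasurableSpace Ω] {μ : Measure Ω} {X : Ω → E}

theorem tendsto_measureReal_le_inner_div (hom : IsHomogeneousAwayFromZero ν α)
    (hconv : ∀ B : Set E, MeasurableSet B →
      (∃ ε > 0, ∀ x ∈ B, ε ≤ ‖x‖) → ν (frontier B) = 0 → ν B ≠ ⊤ →
      Tendsto (fun t : ℝ => (μ {ω | X ω ∈ t • B}).toReal / (μ {ω | t ≤ ‖X ω‖}).toReal)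
        atTop (𝓝 (ν B).toReal))
    {v : E} (hv : v ≠ 0) (hfin : ν {x | 1 ≤ ⟪v, x⟫} ≠ ⊤) {a : ℝ} (ha : 0 < a) :
    Tendsto (fun t => μ.real {ω | t * a ≤ ⟪v, X ω⟫} / μ.real {ω | t ≤ ‖X ω‖}) atTop
      (𝓝 (a ^ (-α) * (ν {x | 1 ≤ ⟪v, x⟫}).toReal)) := by
  have h := hconv _ (measurableSet_setOf_le_inner v a) (exists_pos_le_norm_of_le_inner hv ha)
    (measure_frontier_setOf_le_inner hom hv hfin ha) (measure_setOf_le_inner_ne_top hom hv hfin ha)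
  rw [measure_setOf_le_inner_eq_rpow_mul hom hv ha, ENNReal.toReal_mul,
    ENNReal.toReal_ofReal (Real.rpow_nonneg ha.le _)] at h
  refine h.congr' ?_
  filter_upwards [eventually_gt_atTop 0] with t ht
  rw [smul_setOf_le_inner ht]
  rfl

end Homogeneous

end InnerProductSpace

theorem projection_tail_ratio_to_one_general {d : ℕ} (hd : 0 < d) {Ω : Type*} [MeasurableSpace Ω]
    (μ : Measure Ω) [IsProbabilityMeasure μ]
    (X : Ω → EuclideanSpace ℝ (Fin d))
    (α c : ℝ) (hα : 0 < α) (hc : 0 < c) (ν : Measure (EuclideanSpace ℝ (Fin d)))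
    (hom : ∀ a : ℝ, 0 < a → ∀ B : Set (EuclideanSpace ℝ (Fin d)), MeasurableSet B →
      (∃ ε > 0, ∀ x ∈ B, ε ≤ ‖x‖) → ν (a • B) = ENNReal.ofReal (a ^ (-α)) * ν B)
    (hconv : ∀ B : Set (EuclideanSpace ℝ (Fin d)), MeasurableSet B →
      (∃ ε > 0, ∀ x ∈ B, ε ≤ ‖x‖) → ν (frontier B) = 0 → ν B ≠ ⊤ →
      Tendsto (fun t : ℝ =>
          (μ {ω | X ω ∈ t • B}).toReal / (μ {ω | t ≤ ‖X ω‖}).toReal)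
        atTop (nhds (ν B).toReal))
    (hnorm : Tendsto (fun t : ℝ => (μ {ω | t < ‖X ω‖}).toReal / t ^ (-α))
      atTop (nhds c))
    (v : EuclideanSpace ℝ (Fin d)) (hv : v = EuclideanSpace.single ⟨0, hd⟩ (1 : ℝ))
    (hfinv : ν {x | 1 ≤ ⟪v, x⟫} ≠ ⊤) (hposv : 0 < ν {x | 1 ≤ ⟪v, x⟫})
    (r : ℝ) (hr : 0 < r)
    (U : ℕ → EuclideanSpace ℝ (Fin d))
    (hUv : Tendsto U atTop (nhds v))
    (T : ℕ → ℝ) (hT : Tendsto T atTop atTop) :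
    Tendsto (fun m : ℕ =>
        (μ {ω | T m * r ≤ ⟪U m, X ω⟫}).toReal
          / (μ {ω | T m * r ≤ X ω ⟨0, hd⟩}).toReal)
      atTop (nhds 1) := by
  have hv0 : v ≠ 0 := by simp [hv]
  have hcoord (x : EuclideanSpace ℝ (Fin d)) : ⟪v, x⟫ = x ⟨0, hd⟩ := by
    simp [hv, EuclideanSpace.inner_single_left]
  have hL : 0 < (ν {x | 1 ≤ ⟪v, x⟫}).toReal := ENNReal.toReal_pos hposv.ne' hfinv
  have hhalf (a : ℝ) (ha : 0 < a) :=
    tendsto_measureReal_le_inner_div (X := X) hom hconv hv0 hfinv ha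
  have ht : Tendsto (fun m => T m * r) atTop atTop := hT.atTop_mul_const hr
  have hproj := tendsto_measureReal_le_inner_div_of_tendsto hα hUv ht hhalf
    (eventually_pos_of_tendsto_div_rpow hc hnorm)
    fun K hK => tendsto_comp_mul_div_of_tendsto_div_rpow hc.ne' hnorm hK
  have hfirst : Tendsto
      (fun m => μ.real {ω | T m * r ≤ X ω ⟨0, hd⟩} / μ.real {ω | T m * r ≤ ‖X ω‖})
      atTop (𝓝 (ν {x | 1 ≤ ⟪v, x⟫}).toReal) := by
    simpa [hcoord, Function.comp_def] using (hhalf 1 one_pos).comp ht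
  rw [← div_self hL.ne']
  refine (hproj.div hfirst hL.ne').congr' ?_
  filter_upwards [hfirst.eventually_ne hL.ne'] with m hm
  exact div_div_div_cancel_right₀ (div_ne_zero_iff.1 hm).2 _ _

/-- If unit vectors `u → v = (1,0,…,0)` and `t → ∞`, then
`P(uᵀX₁ ≥ tr)/P(X_{1,1} ≥ tr) → 1` for each fixed `r > 0`, under the assumptions
of Lemma 1. -/
theorem projection_tail_ratio_to_one {d : ℕ} (hd : 0 < d) {Ω : Type*} [MeasurableSpace Ω]
    (μ : Measure Ω) [IsProbabilityMeasure μ]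
    (X : Ω → EuclideanSpace ℝ (Fin d)) (hX : Measurable X)
    (α c : ℝ) (hα : 0 < α) (hc : 0 < c) (ν : Measure (EuclideanSpace ℝ (Fin d)))
    (hom : ∀ a : ℝ, 0 < a → ∀ B : Set (EuclideanSpace ℝ (Fin d)), MeasurableSet B →
      (∃ ε > 0, ∀ x ∈ B, ε ≤ ‖x‖) → ν (a • B) = ENNReal.ofReal (a ^ (-α)) * ν B)
    (hconv : ∀ B : Set (EuclideanSpace ℝ (Fin d)), MeasurableSet B →
      (∃ ε > 0, ∀ x ∈ B, ε ≤ ‖x‖) → ν (frontier B) = 0 → ν B ≠ ⊤ →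
      Tendsto (fun t : ℝ =>
          (μ {ω | X ω ∈ t • B}).toReal / (μ {ω | t ≤ ‖X ω‖}).toReal)
        atTop (nhds (ν B).toReal))
    (hnorm : Tendsto (fun t : ℝ => (μ {ω | t < ‖X ω‖}).toReal / t ^ (-α))
      atTop (nhds c))
    (v : EuclideanSpace ℝ (Fin d)) (hv : v = EuclideanSpace.single ⟨0, hd⟩ (1 : ℝ))
    (hfinv : ν {x | 1 ≤ ⟪v, x⟫} ≠ ⊤) (hposv : 0 < ν {x | 1 ≤ ⟪v, x⟫})
    (r : ℝ) (hr : 0 < r)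
    (U : ℕ → EuclideanSpace ℝ (Fin d)) (hU : ∀ m, ‖U m‖ = 1)
    (hUv : Tendsto U atTop (nhds v))
    (T : ℕ → ℝ) (hT : Tendsto T atTop atTop) :
    Tendsto (fun m : ℕ =>
        (μ {ω | T m * r ≤ ⟪U m, X ω⟫}).toReal
          / (μ {ω | T m * r ≤ X ω ⟨0, hd⟩}).toReal)
      atTop (nhds 1) :=
  projection_tail_ratio_to_one_general hd μ X α c hα hc ν hom hconv hnorm v hv hfinv hposv r hr U
    hUv T hT
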